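/- arXiv:0806.0782 — 2 statements merged into one kernel-verified Lean document; each statement's English description precedes it below -/
import Mathlib

section
/- Let q ≥ p ≥ 1 be real numbers, let d and n be positive natural numbers, and let a_1, …, a_n be positive semi-definite d×d complex matrices. Then Tr M_p(a_1,…,a_n) ≥ Tr M_q(a_1,…,a_n), where M_r(a_1,…,a_n) = ((1/n) ∑_{k=1}^n a_k^{1/r})^r; i.e., the trace of the operator power mean is a decreasing function of the power parameter. -/
open scoped ComplexOrder

/-- `A ^ r` for a matrix `A` and a real exponent `r`, via the continuous functional calculus
(for a positive semi-definite matrix this applies `t ↦ t ^ r` to the eigenvalues). -/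
noncomputable def Matrix.cfcRpow {d : ℕ} (A : Matrix (Fin d) (Fin d) ℂ) (r : ℝ) :
    Matrix (Fin d) (Fin d) ℂ :=
  cfc (fun t : ℝ => t ^ r) A

/-- The operator power mean `M_r(a_1, …, a_n) = ((1/n) ∑_{k=1}^n a_k^{1/r})^r`. -/
noncomputable def powerMean {d n : ℕ} (a : Fin n → Matrix (Fin d) (Fin d) ℂ) (r : ℝ) :
    Matrix (Fin d) (Fin d) ℂ :=
  ((n : ℝ)⁻¹ • ∑ k : Fin n, (a k).cfcRpow r⁻¹).cfcRpow r

section Helpers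

open Finset in
/-- Abel summation: nonneg antitone weights against a sequence with nonpositive
partial sums. -/
lemma abel_aux (N : ℕ) (m e : ℕ → ℝ)
    (hm : ∀ i j, i ≤ j → j < N → m j ≤ m i)
    (hm0 : ∀ i, i < N → 0 ≤ m i)
    (hd : ∀ k, k ≤ N → ∑ i ∈ range k, e i ≤ 0) :
    ∑ i ∈ range N, m i * e i ≤ 0 := by
  induction N generalizing m with
  | zero => simp
  | succ N ih =>
    have key : ∑ i ∈ range (N+1), m i * e i
        = ∑ i ∈ range (N+1), (m i - m N) * e i + m N * ∑ i ∈ range (N+1), e i := by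
      rw [Finset.mul_sum, ← Finset.sum_add_distrib]
      apply Finset.sum_congr rfl; intro i _; ring
    rw [key]
    have h1 : ∑ i ∈ range (N+1), (m i - m N) * e i ≤ 0 := by
      rw [Finset.sum_range_succ, sub_self, zero_mul, add_zero]
      apply ih (fun i => m i - m N)
      · intro i j hij hj
        have := hm i j hij (by omega)
        linarith
      · intro i hi
        have := hm i N (by omega) (by omega)
        linarith
      · intro k hk; exact hd k (by omega)
    have h2 : m N * ∑ i ∈ range (N+1), e i ≤ 0 :=
      mul_nonpos_of_nonneg_of_nonpos (hm0 N (by omega)) (hd (N+1) le_rfl)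
    linarith

/-- Tangent line inequality for rpow. -/
lemma rpow_tangent {p x y : ℝ} (hp : 1 ≤ p) (hx : 0 ≤ x) (hy : 0 ≤ y) :
    x ^ p - y ^ p ≤ p * x ^ (p - 1) * (x - y) := by
  rcases eq_or_lt_of_le hx with h0 | hxpos
  · subst h0
    rw [Real.zero_rpow (by positivity)]
    rcases eq_or_lt_of_le hp with h1 | h1
    · subst h1; simp [Real.rpow_one]
    · rw [Real.zero_rpow (by linarith)]
      have : 0 ≤ y ^ p := Real.rpow_nonneg hy p
      nlinarith
  · have hb := one_add_mul_self_le_rpow_one_add (s := y / x - 1) (by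
      have : 0 ≤ y / x := div_nonneg hy hxpos.le
      linarith) hp
    rw [show (1 : ℝ) + (y / x - 1) = y / x by ring] at hb
    rw [Real.div_rpow hy hxpos.le] at hb
    have hxp : (0:ℝ) < x ^ p := Real.rpow_pos_of_pos hxpos p
    have hxp1 : x ^ (p - 1) * x = x ^ p := by
      rw [← Real.rpow_add_one (ne_of_gt hxpos)]; ring_nf
    have hb' : x ^ p * (1 + p * (y / x - 1)) ≤ y ^ p := by
      rw [mul_comm]
      calc (1 + p * (y / x - 1)) * x ^ p ≤ (y ^ p / x ^ p) * x ^ p :=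
            mul_le_mul_of_nonneg_right hb hxp.le
        _ = y ^ p := by field_simp
    have hxx : x ^ p * (p * (y / x)) = p * x ^ (p-1) * y := by
      rw [← hxp1]; field_simp
    nlinarith [hb']

open Finset
lemma filt_map {d k : ℕ} (hk : k ≤ d) :
    Finset.univ.filter (fun j : Fin d => (j:ℕ) < k)
      = Finset.map (Fin.castLEEmb hk) Finset.univ := by
  ext j
  simp only [Finset.mem_filter, Finset.mem_univ, true_and, Finset.mem_map,
    Fin.castLEEmb_apply]
  constructor
  · intro h
    exact ⟨⟨(j:ℕ), h⟩, by ext; rfl⟩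
  · rintro ⟨i, rfl⟩
    exact i.2

lemma card_filt {d k : ℕ} (hk : k ≤ d) :
    (Finset.univ.filter (fun j : Fin d => (j:ℕ) < k)).card = k := by
  rw [filt_map hk]; simp

lemma sum_filt {d k : ℕ} (hk : k ≤ d) (g : Fin d → ℝ) :
    ∑ j ∈ Finset.univ.filter (fun j : Fin d => (j:ℕ) < k), g j
      = ∑ i ∈ Finset.range k, (if h : i < d then g ⟨i, h⟩ else 0) := by
  rw [filt_map hk, Finset.sum_map, ← Fin.sum_univ_eq_sum_range]
  apply Finset.sum_congr rfl
  intro i _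
  rw [dif_pos (lt_of_lt_of_le i.2 hk)]
  rfl

/-- Scalar Ky Fan bound: a doubly stochastic mixture of `lam`, summed over any
index set `F`, is at most the sum of the `|F|` largest values of `lam`. -/
lemma kyfan_core {d : ℕ} (lam : Fin d → ℝ) (τ : Equiv.Perm (Fin d))
    (hsort : ∀ i j : Fin d, i ≤ j → lam (τ j) ≤ lam (τ i))
    (T : Fin d → Fin d → ℝ) (hT : ∀ i m, 0 ≤ T i m)
    (hrow : ∀ i, ∑ m, T i m = 1) (hcol : ∀ m, ∑ i, T i m = 1)
    (F : Finset (Fin d)) :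
    ∑ i ∈ F, ∑ m, lam m * T i m
      ≤ ∑ j ∈ univ.filter (fun j : Fin d => (j:ℕ) < F.card), lam (τ j) := by
  have hk : F.card ≤ d := by simpa using Finset.card_le_univ F
  rcases Nat.eq_zero_or_pos F.card with h0 | hpos
  · have hF : F = ∅ := Finset.card_eq_zero.mp h0
    subst hF
    simp
  · set k := F.card with hkdef
    have hk1 : k - 1 < d := by omega
    set μ := lam (τ ⟨k - 1, hk1⟩) with hμ
    calc ∑ i ∈ F, ∑ m, lam m * T i m
        = ∑ i ∈ F, (∑ m, (lam m - μ) * T i m + μ) := by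
          apply Finset.sum_congr rfl; intro i _
          have h1 : ∑ m, (lam m - μ) * T i m
              = ∑ m, lam m * T i m - μ * ∑ m, T i m := by
            rw [Finset.mul_sum, ← Finset.sum_sub_distrib]
            apply Finset.sum_congr rfl; intros; ring
          rw [h1, hrow i]; ring
      _ = (∑ i ∈ F, ∑ m, (lam m - μ) * T i m) + k * μ := by
          rw [Finset.sum_add_distrib, Finset.sum_const, nsmul_eq_mul, hkdef]
      _ ≤ (∑ m, max (lam m - μ) 0) + k * μ := by
          refine add_le_add ?_ le_rfl
          rw [Finset.sum_comm]
          apply Finset.sum_le_sum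
          intro m _
          calc ∑ i ∈ F, (lam m - μ) * T i m
              ≤ ∑ i ∈ F, max (lam m - μ) 0 * T i m :=
                Finset.sum_le_sum fun i _ =>
                  mul_le_mul_of_nonneg_right (le_max_left _ _) (hT i m)
            _ = max (lam m - μ) 0 * ∑ i ∈ F, T i m := by rw [Finset.mul_sum]
            _ ≤ max (lam m - μ) 0 * 1 := by
                apply mul_le_mul_of_nonneg_left _ (le_max_right _ _)
                calc ∑ i ∈ F, T i m ≤ ∑ i, T i m :=
                      Finset.sum_le_sum_of_subset_of_nonneg (Finset.subset_univ F)
                        (fun i _ _ => hT i m)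
                  _ = 1 := hcol m
            _ = max (lam m - μ) 0 := mul_one _
      _ = (∑ j, max (lam (τ j) - μ) 0) + k * μ := by
          rw [Equiv.sum_comp τ (fun m => max (lam m - μ) 0)]
      _ = (∑ j ∈ univ.filter (fun j : Fin d => (j:ℕ) < k), (lam (τ j) - μ)) + k * μ := by
          congr 1
          rw [← Finset.sum_filter_add_sum_filter_not univ (fun j : Fin d => (j:ℕ) < k)]
          have h2 : ∑ j ∈ univ.filter (fun j : Fin d => ¬((j:ℕ) < k)),
              max (lam (τ j) - μ) 0 = 0 := by
            apply Finset.sum_eq_zero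
            intro j hj
            simp only [Finset.mem_filter, Finset.mem_univ, true_and, not_lt] at hj
            have hle : (⟨k - 1, hk1⟩ : Fin d) ≤ j := by
              rw [Fin.le_def]; simpa using by omega
            have := hsort _ _ hle
            rw [max_eq_right (by linarith)]
          rw [h2, add_zero]
          apply Finset.sum_congr rfl
          intro j hj
          simp only [Finset.mem_filter, Finset.mem_univ, true_and] at hj
          have hle : j ≤ (⟨k - 1, hk1⟩ : Fin d) := by
            rw [Fin.le_def]; simpa using by omega
          have := hsort _ _ hle
          rw [max_eq_left (by linarith)]
      _ = ∑ j ∈ univ.filter (fun j : Fin d => (j:ℕ) < k), lam (τ j) := by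
          rw [Finset.sum_sub_distrib, Finset.sum_const, card_filt hk, nsmul_eq_mul]
          ring

/-- Weak majorization transfer: if every partial sum of `x` is dominated by the
corresponding top partial sum of the antitone `ys`, then `∑ x^p ≤ ∑ ys^p`. -/
lemma transfer {d : ℕ} {p : ℝ} (hp : 1 ≤ p) (x ys : Fin d → ℝ)
    (hx : ∀ i, 0 ≤ x i) (hys : ∀ i, 0 ≤ ys i)
    (hsort : ∀ i j : Fin d, i ≤ j → ys j ≤ ys i)
    (H : ∀ F : Finset (Fin d),
      ∑ i ∈ F, x i ≤ ∑ j ∈ univ.filter (fun j : Fin d => (j:ℕ) < F.card), ys j) :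
    ∑ i, x i ^ p ≤ ∑ i, ys i ^ p := by
  classical
  set σ := Tuple.sort (fun i => -x i) with hσdef
  have hxs : ∀ i j : Fin d, i ≤ j → x (σ j) ≤ x (σ i) := by
    intro i j hij
    have := Tuple.monotone_sort (fun i => -x i) hij
    simpa using this
  set xe : ℕ → ℝ := fun i => if h : i < d then x (σ ⟨i, h⟩) else 0 with hxe
  set ye : ℕ → ℝ := fun i => if h : i < d then ys ⟨i, h⟩ else 0 with hye
  have hxe0 : ∀ i, 0 ≤ xe i := by
    intro i; rw [hxe]; dsimp only; split
    · exact hx _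
    · exact le_rfl
  have hye0 : ∀ i, 0 ≤ ye i := by
    intro i; rw [hye]; dsimp only; split
    · exact hys _
    · exact le_rfl
  -- partial sums domination
  have hps : ∀ k, k ≤ d → ∑ i ∈ range k, (xe i - ye i) ≤ 0 := by
    intro k hk
    rw [Finset.sum_sub_distrib, sub_nonpos]
    have hsx : ∑ i ∈ range k, xe i
        = ∑ j ∈ univ.filter (fun j : Fin d => (j:ℕ) < k), x (σ j) :=
      (sum_filt hk (fun j => x (σ j))).symm
    have hsy : ∑ i ∈ range k, ye i
        = ∑ j ∈ univ.filter (fun j : Fin d => (j:ℕ) < k), ys j :=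
      (sum_filt hk ys).symm
    rw [hsx, hsy]
    set F := (univ.filter (fun j : Fin d => (j:ℕ) < k)).image σ with hF
    have hcard : F.card = k := by
      rw [hF, Finset.card_image_of_injective _ σ.injective, card_filt hk]
    have hsum : ∑ i ∈ F, x i
        = ∑ j ∈ univ.filter (fun j : Fin d => (j:ℕ) < k), x (σ j) := by
      rw [hF]
      exact Finset.sum_image (fun a _ b _ hab => σ.injective hab)
    have := H F
    rw [hcard, hsum] at this
    exact this
  -- rewrite the two sides as sums of xe^p, ye^p over range d
  have hfull : univ.filter (fun j : Fin d => (j:ℕ) < d) = (univ : Finset (Fin d)) := by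
    apply Finset.filter_true_of_mem; intro j _; exact j.2
  have hxsum : ∑ i, x i ^ p = ∑ i ∈ range d, xe i ^ p := by
    rw [← Equiv.sum_comp σ (fun i => x i ^ p), ← hfull]
    rw [sum_filt (le_refl d) (fun j => x (σ j) ^ p)]
    apply Finset.sum_congr rfl
    intro i hi
    have hid : i < d := Finset.mem_range.mp hi
    rw [dif_pos hid, hxe]
    dsimp only
    rw [dif_pos hid]
  have hysum : ∑ i, ys i ^ p = ∑ i ∈ range d, ye i ^ p := by
    rw [← hfull, sum_filt (le_refl d) (fun j => ys j ^ p)]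
    apply Finset.sum_congr rfl
    intro i hi
    have hid : i < d := Finset.mem_range.mp hi
    rw [dif_pos hid, hye]
    dsimp only
    rw [dif_pos hid]
  rw [hxsum, hysum, ← sub_nonpos, ← Finset.sum_sub_distrib]
  calc ∑ i ∈ range d, (xe i ^ p - ye i ^ p)
      ≤ ∑ i ∈ range d, p * xe i ^ (p - 1) * (xe i - ye i) :=
        Finset.sum_le_sum fun i _ => rpow_tangent hp (hxe0 i) (hye0 i)
    _ = p * ∑ i ∈ range d, xe i ^ (p - 1) * (xe i - ye i) := by
        rw [Finset.mul_sum]; apply Finset.sum_congr rfl; intros; ring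
    _ ≤ 0 := by
        apply mul_nonpos_of_nonneg_of_nonpos (by linarith)
        apply abel_aux d (fun i => xe i ^ (p - 1)) (fun i => xe i - ye i)
        · intro i j hij hj
          apply Real.rpow_le_rpow (hxe0 j) _ (by linarith)
          rw [hxe]; dsimp only
          rw [dif_pos hj, dif_pos (lt_of_le_of_lt hij hj)]
          exact hxs _ _ (by simpa using hij)
        · intro i _; exact Real.rpow_nonneg (hxe0 i) _
        · exact hps


open scoped ComplexOrder
open Finset Matrix

namespace PM
variable {d : ℕ}

lemma star_dot_mulVec_left (V : Matrix (Fin d) (Fin d) ℂ) (u z : Fin d → ℂ) :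
    star u ⬝ᵥ (V *ᵥ z) = star (star V *ᵥ u) ⬝ᵥ z := by
  rw [Matrix.dotProduct_mulVec]
  congr 1
  rw [Matrix.star_mulVec, Matrix.star_eq_conjTranspose, Matrix.conjTranspose_conjTranspose]

lemma dot_star_self (z : Fin d → ℂ) :
    star z ⬝ᵥ z = ((∑ m, Complex.normSq (z m) : ℝ) : ℂ) := by
  rw [dotProduct]
  push_cast
  apply Finset.sum_congr rfl
  intro m _
  rw [Pi.star_apply, Complex.normSq_eq_conj_mul_self, Complex.star_def]

/-- Quadratic form of a matrix function via eigendecomposition. -/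
lemma qf {A : Matrix (Fin d) (Fin d) ℂ} (hA : A.IsHermitian) (f : ℝ → ℝ) (u : Fin d → ℂ) :
    star u ⬝ᵥ (hA.cfc f *ᵥ u)
      = ((∑ m, f (hA.eigenvalues m) * Complex.normSq
          ((star (hA.eigenvectorUnitary : Matrix (Fin d) (Fin d) ℂ) *ᵥ u) m) : ℝ) : ℂ) := by
  set V := (hA.eigenvectorUnitary : Matrix (Fin d) (Fin d) ℂ) with hV
  set w := star V *ᵥ u with hw
  show star u ⬝ᵥ ((V * Matrix.diagonal (Complex.ofReal ∘ f ∘ hA.eigenvalues) * star V) *ᵥ u) = _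
  rw [← Matrix.mulVec_mulVec, ← Matrix.mulVec_mulVec, star_dot_mulVec_left, ← hw]
  rw [dotProduct]
  push_cast
  apply Finset.sum_congr rfl
  intro m _
  rw [Matrix.mulVec_diagonal]
  simp only [Pi.star_apply, Function.comp_apply]
  rw [Complex.normSq_eq_conj_mul_self, Complex.star_def]
  ring

lemma trace_cfc' {A : Matrix (Fin d) (Fin d) ℂ} (hA : A.IsHermitian) (f : ℝ → ℝ) :
    (hA.cfc f).trace = ((∑ m, f (hA.eigenvalues m) : ℝ) : ℂ) := by
  show (hA.eigenvectorUnitary * Matrix.diagonal (Complex.ofReal ∘ f ∘ hA.eigenvalues)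
      * star (hA.eigenvectorUnitary : Matrix (Fin d) (Fin d) ℂ) : Matrix (Fin d) (Fin d) ℂ).trace = _
  rw [Matrix.trace_mul_cycle, Unitary.coe_star_mul_self, one_mul, Matrix.trace_diagonal]
  push_cast
  rfl

lemma cfc_posSemidef {A : Matrix (Fin d) (Fin d) ℂ} (hA : A.IsHermitian) (f : ℝ → ℝ)
    (hf : ∀ i, 0 ≤ f (hA.eigenvalues i)) : (hA.cfc f).PosSemidef := by
  show (hA.eigenvectorUnitary * Matrix.diagonal (Complex.ofReal ∘ f ∘ hA.eigenvalues)
      * star (hA.eigenvectorUnitary : Matrix (Fin d) (Fin d) ℂ) : Matrix (Fin d) (Fin d) ℂ).PosSemidef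
  rw [Matrix.star_eq_conjTranspose]
  exact (Matrix.PosSemidef.diagonal (fun i => by
    simpa using Complex.real_le_real.mpr (hf i))).mul_mul_conjTranspose_same _

lemma col_normSq {M : Matrix (Fin d) (Fin d) ℂ} (h : star M * M = 1) (i : Fin d) :
    ∑ j, Complex.normSq (M j i) = 1 := by
  have h1 : (star M * M) i i = (1 : Matrix (Fin d) (Fin d) ℂ) i i := by rw [h]
  rw [Matrix.mul_apply, Matrix.one_apply_eq] at h1
  have h2 : ((∑ j, Complex.normSq (M j i) : ℝ) : ℂ) = 1 := by
    push_cast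
    rw [← h1]
    apply Finset.sum_congr rfl
    intro j _
    rw [Matrix.star_apply, Complex.normSq_eq_conj_mul_self]
    rfl
  exact_mod_cast h2

lemma row_normSq {M : Matrix (Fin d) (Fin d) ℂ} (h : M * star M = 1) (m : Fin d) :
    ∑ i, Complex.normSq (M m i) = 1 := by
  have h1 : (M * star M) m m = (1 : Matrix (Fin d) (Fin d) ℂ) m m := by rw [h]
  rw [Matrix.mul_apply, Matrix.one_apply_eq] at h1
  have h2 : ((∑ i, Complex.normSq (M m i) : ℝ) : ℂ) = 1 := by
    push_cast
    rw [← h1]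
    apply Finset.sum_congr rfl
    intro j _
    rw [Matrix.star_apply, ← Complex.mul_conj]
    rfl
  exact_mod_cast h2

lemma smul_posSemidef {M : Matrix (Fin d) (Fin d) ℂ} (hM : M.PosSemidef)
    {r : ℝ} (hr : 0 ≤ r) : (r • M).PosSemidef := by
  constructor
  · unfold Matrix.IsHermitian
    rw [Matrix.conjTranspose_smul, hM.1.eq]
    norm_num
  · intro x
    have := (hM.smul (a := (r:ℂ)) (by exact_mod_cast hr)).2 x
    simpa [Complex.real_smul] using this


lemma normSq_star_mulVec {W : Matrix (Fin d) (Fin d) ℂ} (h : W * star W = 1)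
    (u : Fin d → ℂ) :
    ∑ m, Complex.normSq ((star W *ᵥ u) m) = ∑ j, Complex.normSq (u j) := by
  have h1 : star (star W *ᵥ u) ⬝ᵥ (star W *ᵥ u) = star u ⬝ᵥ u := by
    rw [← star_dot_mulVec_left, Matrix.mulVec_mulVec, h, Matrix.one_mulVec]
  rw [dot_star_self, dot_star_self] at h1
  exact_mod_cast h1

lemma cfc_id' {A : Matrix (Fin d) (Fin d) ℂ} (hA : A.IsHermitian) :
    hA.cfc (fun t : ℝ => t) = A :=
  hA.spectral_theorem.symm

/-- Master per-vector inequality: for a unit vector `u`,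
`⟨u, M_p-kernel u⟩ ≥ ⟨u, M_q-kernel u⟩ ^ s`. -/
lemma master {n : ℕ} (hn : 0 < n) {p q s : ℝ} (hs1 : 1 ≤ s) (hqs : q⁻¹ * s = p⁻¹)
    (a : Fin n → Matrix (Fin d) (Fin d) ℂ) (ha : ∀ k, (a k).PosSemidef)
    (u : Fin d → ℂ) (hu : ∑ j, Complex.normSq (u j) = 1) :
    ((star u ⬝ᵥ (((n:ℝ)⁻¹ • ∑ k, (a k).cfcRpow q⁻¹) *ᵥ u)).re) ^ s
      ≤ (star u ⬝ᵥ (((n:ℝ)⁻¹ • ∑ k, (a k).cfcRpow p⁻¹) *ᵥ u)).re := by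
  classical
  -- weights from each a_j's eigendecomposition
  set w : Fin n → Fin d → ℝ := fun j m => Complex.normSq
    ((star ((ha j).1.eigenvectorUnitary : Matrix (Fin d) (Fin d) ℂ) *ᵥ u) m) with hw
  set X : ℝ → Fin n → ℝ := fun r j => ∑ m, ((ha j).1.eigenvalues m) ^ r * w j m with hX
  have hqf : ∀ (r : ℝ) (j : Fin n),
      star u ⬝ᵥ ((a j).cfcRpow r *ᵥ u) = ((X r j : ℝ) : ℂ) := by
    intro r j
    show star u ⬝ᵥ (cfc (fun t : ℝ => t ^ r) (a j) *ᵥ u) = _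
    rw [(ha j).1.cfc_eq]
    exact qf (ha j).1 (fun t => t ^ r) u
  have hWu : ∀ j : Fin n, ((ha j).1.eigenvectorUnitary : Matrix (Fin d) (Fin d) ℂ)
      * star ((ha j).1.eigenvectorUnitary : Matrix (Fin d) (Fin d) ℂ) = 1 :=
    fun j => (Matrix.mem_unitaryGroup_iff).mp ((ha j).1.eigenvectorUnitary).2
  have hw1 : ∀ j, ∑ m, w j m = 1 := by
    intro j
    rw [hw]
    simpa [hu] using normSq_star_mulVec (hWu j) u
  have hwnn : ∀ j m, 0 ≤ w j m := fun j m => Complex.normSq_nonneg _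
  have hXnn : ∀ r j, 0 ≤ X r j := by
    intro r j
    apply Finset.sum_nonneg
    intro m _
    exact mul_nonneg (Real.rpow_nonneg ((ha j).eigenvalues_nonneg m) r) (hwnn j m)
  have hdot : ∀ r : ℝ, star u ⬝ᵥ (((n:ℝ)⁻¹ • ∑ k, (a k).cfcRpow r) *ᵥ u)
      = (((n:ℝ)⁻¹ * ∑ j, X r j : ℝ) : ℂ) := by
    intro r
    rw [Matrix.smul_mulVec, dotProduct_smul]
    have hvec : ((∑ k, (a k).cfcRpow r) *ᵥ u) = ∑ k, ((a k).cfcRpow r *ᵥ u) := by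
      ext i
      simp [Matrix.mulVec, dotProduct, Matrix.sum_apply, Finset.sum_mul,
        Finset.sum_apply]
      exact Finset.sum_comm
    have hsum : star u ⬝ᵥ ((∑ k, (a k).cfcRpow r) *ᵥ u)
        = ∑ j, star u ⬝ᵥ ((a j).cfcRpow r *ᵥ u) := by
      rw [hvec]
      simp [dotProduct, Finset.sum_apply, Finset.mul_sum]
      exact Finset.sum_comm
    rw [hsum]
    rw [Finset.sum_congr rfl (fun j _ => hqf r j)]
    rw [Complex.real_smul]
    push_cast
    rw [Finset.mul_sum]
  rw [hdot q⁻¹, hdot p⁻¹, Complex.ofReal_re, Complex.ofReal_re]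
  -- per-j Jensen
  have hjen : ∀ j, (X q⁻¹ j) ^ s ≤ X p⁻¹ j := by
    intro j
    have hmain := (convexOn_rpow hs1).map_sum_le (t := Finset.univ)
      (w := w j) (p := fun m => ((ha j).1.eigenvalues m) ^ q⁻¹)
      (fun m _ => hwnn j m) (hw1 j)
      (fun m _ => Real.rpow_nonneg ((ha j).eigenvalues_nonneg m) q⁻¹)
    have hXq : X q⁻¹ j = ∑ m, w j m • ((ha j).1.eigenvalues m) ^ q⁻¹ := by
      rw [hX]; apply Finset.sum_congr rfl; intros; simp [mul_comm]
    rw [hXq]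
    refine le_trans hmain (le_of_eq ?_)
    rw [hX]
    apply Finset.sum_congr rfl
    intro m _
    rw [smul_eq_mul, ← Real.rpow_mul ((ha j).eigenvalues_nonneg m), hqs, mul_comm]
  -- outer Jensen over j
  have hsum1 : ∑ _j : Fin n, (n:ℝ)⁻¹ = 1 := by
    rw [Finset.sum_const, Finset.card_univ, Fintype.card_fin, nsmul_eq_mul]
    field_simp
  have houter := (convexOn_rpow hs1).map_sum_le (t := Finset.univ)
    (w := fun _ : Fin n => (n:ℝ)⁻¹) (p := fun j => X q⁻¹ j)
    (fun j _ => by positivity) hsum1 (fun j _ => hXnn q⁻¹ j)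
  have h1 : (n:ℝ)⁻¹ * ∑ j, X q⁻¹ j = ∑ j, (n:ℝ)⁻¹ • X q⁻¹ j := by
    rw [← Finset.smul_sum, smul_eq_mul]
  rw [h1]
  refine le_trans houter ?_
  rw [Finset.mul_sum]
  apply Finset.sum_le_sum
  intro j _
  rw [smul_eq_mul]
  exact mul_le_mul_of_nonneg_left (hjen j) (by positivity)

end PM

/-- **The trace of the power mean is decreasing in the power parameter (Section 3).**
Let `q ≥ p ≥ 1`, let `d, n > 0`, and let `a_1, …, a_n` be positive semi-definite `d × d`
complex matrices.  Then `Tr M_p(a_1,…,a_n) ≥ Tr M_q(a_1,…,a_n)`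
(the traces being real numbers, compared via their real parts). -/
theorem trace_powerMean_antitone
    {d n : ℕ} (hd : 0 < d) (hn : 0 < n)
    (p q : ℝ) (hp : 1 ≤ p) (hpq : p ≤ q)
    (a : Fin n → Matrix (Fin d) (Fin d) ℂ) (ha : ∀ k, (a k).PosSemidef) :
    (Matrix.trace (powerMean a q)).re ≤ (Matrix.trace (powerMean a p)).re := by
  classical
  have hp0 : 0 < p := lt_of_lt_of_le one_pos hp
  have hq0 : 0 < q := lt_of_lt_of_le one_pos (hp.trans hpq)
  set s : ℝ := q / p with hs
  have hs1 : 1 ≤ s := (one_le_div hp0).mpr hpq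
  have hqs : q⁻¹ * s = p⁻¹ := by rw [hs]; field_simp
  have hsp : s * p = q := div_mul_cancel₀ q (ne_of_gt hp0)
  set C : Matrix (Fin d) (Fin d) ℂ := (n:ℝ)⁻¹ • ∑ k, (a k).cfcRpow q⁻¹ with hCdef
  set D : Matrix (Fin d) (Fin d) ℂ := (n:ℝ)⁻¹ • ∑ k, (a k).cfcRpow p⁻¹ with hDdef
  have hbpsd : ∀ (r : ℝ) (j : Fin n), ((a j).cfcRpow r).PosSemidef := by
    intro r j
    show (cfc (fun t : ℝ => t ^ r) (a j)).PosSemidef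
    rw [(ha j).1.cfc_eq]
    exact PM.cfc_posSemidef (ha j).1 _
      (fun i => Real.rpow_nonneg ((ha j).eigenvalues_nonneg i) r)
  have hsumpsd : ∀ r : ℝ, (∑ k, (a k).cfcRpow r).PosSemidef := fun r =>
    Finset.sum_induction _ _ (fun _ _ h1 h2 => h1.add h2) Matrix.PosSemidef.zero
      (fun j _ => hbpsd r j)
  have hCpsd : C.PosSemidef := by
    rw [hCdef]; exact PM.smul_posSemidef (hsumpsd q⁻¹) (by positivity)
  have hDpsd : D.PosSemidef := by
    rw [hDdef]; exact PM.smul_posSemidef (hsumpsd p⁻¹) (by positivity)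
  set c : Fin d → ℝ := hCpsd.1.eigenvalues with hc
  set y : Fin d → ℝ := hDpsd.1.eigenvalues with hy
  have hcnn : ∀ i, 0 ≤ c i := fun i => hCpsd.eigenvalues_nonneg i
  have hynn : ∀ i, 0 ≤ y i := fun i => hDpsd.eigenvalues_nonneg i
  have htrq : (Matrix.trace (powerMean a q)).re = ∑ i, c i ^ q := by
    have h1 : powerMean a q = cfc (fun t : ℝ => t ^ q) C := rfl
    rw [h1, hCpsd.1.cfc_eq, PM.trace_cfc', Complex.ofReal_re]
  have htrp : (Matrix.trace (powerMean a p)).re = ∑ i, y i ^ p := by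
    have h1 : powerMean a p = cfc (fun t : ℝ => t ^ p) D := rfl
    rw [h1, hDpsd.1.cfc_eq, PM.trace_cfc', Complex.ofReal_re]
  rw [htrq, htrp]
  set VC : Matrix (Fin d) (Fin d) ℂ :=
    (hCpsd.1.eigenvectorUnitary : Matrix (Fin d) (Fin d) ℂ) with hVCdef
  set VD : Matrix (Fin d) (Fin d) ℂ :=
    (hDpsd.1.eigenvectorUnitary : Matrix (Fin d) (Fin d) ℂ) with hVDdef
  have hVC1 : star VC * VC = 1 :=
    Matrix.mem_unitaryGroup_iff'.mp hCpsd.1.eigenvectorUnitary.2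
  have hVC2 : VC * star VC = 1 :=
    Matrix.mem_unitaryGroup_iff.mp hCpsd.1.eigenvectorUnitary.2
  have hVD1 : star VD * VD = 1 :=
    Matrix.mem_unitaryGroup_iff'.mp hDpsd.1.eigenvectorUnitary.2
  have hVD2 : VD * star VD = 1 :=
    Matrix.mem_unitaryGroup_iff.mp hDpsd.1.eigenvectorUnitary.2
  set M : Matrix (Fin d) (Fin d) ℂ := star VD * VC with hM
  have hM1 : star M * M = 1 := by
    rw [hM, StarMul.star_mul, star_star, mul_assoc, ← mul_assoc VD, hVD2, one_mul, hVC1]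
  have hM2 : M * star M = 1 := by
    rw [hM, StarMul.star_mul, star_star, mul_assoc, ← mul_assoc VC, hVC2, one_mul, hVD1]
  set u : Fin d → Fin d → ℂ := fun i j => VC j i with hu
  set T : Fin d → Fin d → ℝ := fun i m => Complex.normSq (M m i) with hT
  have hTnn : ∀ i m, 0 ≤ T i m := fun _ _ => Complex.normSq_nonneg _
  have hrow : ∀ i, ∑ m, T i m = 1 := fun i => PM.col_normSq hM1 i
  have hcol : ∀ m, ∑ i, T i m = 1 := fun m => PM.row_normSq hM2 m
  have hunit : ∀ i, ∑ j, Complex.normSq (u i j) = 1 := fun i => PM.col_normSq hVC1 i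
  have hueq : ∀ i, u i = ⇑(hCpsd.1.eigenvectorBasis i) := by
    intro i; funext j
    rw [hu]
    exact Matrix.IsHermitian.eigenvectorUnitary_apply hCpsd.1 j i
  have hci : ∀ i, c i = (star (u i) ⬝ᵥ (C *ᵥ u i)).re := by
    intro i
    rw [hueq i, hc]
    simpa using hCpsd.1.eigenvalues_eq i
  have hMv : ∀ i, star VD *ᵥ u i = fun m => M m i := by
    intro i; funext m
    simp [hu, hM, Matrix.mulVec, Matrix.mul_apply, dotProduct]
  have hY : ∀ i, (star (u i) ⬝ᵥ (D *ᵥ u i)).re = ∑ m, y m * T i m := by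
    intro i
    have h2 : star (u i) ⬝ᵥ (D *ᵥ u i) = ((∑ m, y m * T i m : ℝ) : ℂ) := by
      conv_lhs => rw [← PM.cfc_id' hDpsd.1]
      rw [PM.qf hDpsd.1 (fun t => t) (u i), hMv i]
    rw [h2, Complex.ofReal_re]
  have hmaster : ∀ i, (c i) ^ s ≤ ∑ m, y m * T i m := by
    intro i
    rw [← hY i, hci i]
    have := PM.master hn hs1 hqs a ha (u i) (hunit i)
    rw [← hCdef, ← hDdef] at this
    exact this
  set τ : Equiv.Perm (Fin d) := Tuple.sort (fun i => -(y i)) with hτ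
  have hysort : ∀ i j : Fin d, i ≤ j → y (τ j) ≤ y (τ i) := by
    intro i j hij
    have := Tuple.monotone_sort (fun i => -(y i)) hij
    simpa using this
  have hH : ∀ F : Finset (Fin d), ∑ i ∈ F, (c i) ^ s
      ≤ ∑ j ∈ Finset.univ.filter (fun j : Fin d => (j:ℕ) < F.card), y (τ j) := by
    intro F
    calc ∑ i ∈ F, (c i) ^ s ≤ ∑ i ∈ F, ∑ m, y m * T i m :=
          Finset.sum_le_sum (fun i _ => hmaster i)
      _ ≤ _ := kyfan_core y τ hysort T hTnn hrow hcol F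
  have hfinal := transfer hp (fun i => (c i) ^ s) (fun j => y (τ j))
    (fun i => Real.rpow_nonneg (hcnn i) s) (fun i => hynn _) hysort hH
  calc ∑ i, c i ^ q = ∑ i, ((c i) ^ s) ^ p := by
        apply Finset.sum_congr rfl
        intro i _
        rw [← hsp, Real.rpow_mul (hcnn i)]
    _ ≤ ∑ i, (y (τ i)) ^ p := hfinal
    _ = ∑ i, y i ^ p := Equiv.sum_comp τ (fun i => y i ^ p)
end Helpers
end

section
/- Let d and n be positive natural numbers, let p ≥ 1 be a real number, and let a_1, …, a_n be positive definite d×d complex matrices. Then Tr((1/n) ∑_{k=1}^n a_k^{1/p})^p ≤ Tr exp((1/n) ∑_{k=1}^n p(a_k^{1/p} − I)), where I is the identity matrix. -/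
open scoped ComplexOrder
open Matrix

lemma key_scalar {p t : ℝ} (hp : 1 ≤ p) (ht : 0 ≤ t) : t ^ p ≤ Real.exp (p * (t - 1)) := by
  rcases eq_or_lt_of_le ht with h | h
  · rw [← h, Real.zero_rpow (by linarith)]
    positivity
  · rw [Real.rpow_def_of_pos h]
    apply Real.exp_le_exp.mpr
    nlinarith [Real.log_le_sub_one_of_pos h]

lemma cfc_posSemidef {d : ℕ} {A : Matrix (Fin d) (Fin d) ℂ} (hA : A.IsHermitian)
    (f : ℝ → ℝ) (hf : ∀ i, 0 ≤ f (hA.eigenvalues i)) : (cfc f A).PosSemidef := by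
  rw [hA.cfc_eq, Matrix.IsHermitian.cfc, Unitary.conjStarAlgAut_apply, Matrix.star_eq_conjTranspose]
  refine (Matrix.posSemidef_diagonal_iff.mpr ?_).mul_mul_conjTranspose_same _
  intro i
  simpa using hf i

lemma trace_unitary_conj {d : ℕ} (U : unitary (Matrix (Fin d) (Fin d) ℂ))
    (D : Matrix (Fin d) (Fin d) ℂ) :
    Matrix.trace ((U : Matrix (Fin d) (Fin d) ℂ) * D * star (U : Matrix (Fin d) (Fin d) ℂ))
      = Matrix.trace D := by
  rw [Matrix.trace_mul_cycle, Unitary.coe_star_mul_self, one_mul]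

/-- **Upper bound for the trace of the power mean (Theorem 3.3, second step).**
Let `d, n > 0`, let `p ≥ 1`, and let `a_1, …, a_n` be positive definite `d × d` complex
matrices.  Then
`Tr((1/n) ∑_{k=1}^n a_k^{1/p})^p ≤ Tr exp((1/n) ∑_{k=1}^n p(a_k^{1/p} − I))`,
where `I` is the identity matrix and `exp` is the matrix exponential (traces taken as real
numbers via their real parts). -/
theorem trace_powerMean_le_trace_exp
    {d n : ℕ} (hd : 0 < d) (hn : 0 < n)
    (p : ℝ) (hp : 1 ≤ p)
    (a : Fin n → Matrix (Fin d) (Fin d) ℂ) (ha : ∀ k, (a k).PosDef) :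
    (Matrix.trace (((n : ℝ)⁻¹ • ∑ k : Fin n, (a k).cfcRpow p⁻¹).cfcRpow p)).re
      ≤ (Matrix.trace (NormedSpace.exp
          ((n : ℝ)⁻¹ • ∑ k : Fin n, p • ((a k).cfcRpow p⁻¹ - 1)))).re := by
  classical
  set A : Fin n → Matrix (Fin d) (Fin d) ℂ := fun k => (a k).cfcRpow p⁻¹ with hAdef
  have hAsa : ∀ k, IsSelfAdjoint (A k) := fun k => cfc_predicate _ _
  have hApsd : ∀ k, (A k).PosSemidef := by
    intro k
    refine cfc_posSemidef (ha k).isHermitian _ (fun i => ?_)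
    exact Real.rpow_nonneg ((ha k).eigenvalues_pos i).le _
  set B : Matrix (Fin d) (Fin d) ℂ := (n : ℝ)⁻¹ • ∑ k, A k with hBdef
  have hBsa : IsSelfAdjoint B := by
    rw [hBdef]
    refine IsSelfAdjoint.smul (star_trivial _) ?_
    exact Finset.sum_induction _ _ (fun x y hx hy => hx.add hy) (.zero _) (fun k _ => hAsa k)
  have hB : B.IsHermitian := hBsa
  have psd_add : ∀ {X Y : Matrix (Fin d) (Fin d) ℂ},
      X.PosSemidef → Y.PosSemidef → (X + Y).PosSemidef := by
    intro X Y hX hY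
    rw [Matrix.posSemidef_iff_dotProduct_mulVec] at hX hY ⊢
    refine ⟨hX.1.add hY.1, fun x => ?_⟩
    rw [Matrix.add_mulVec, dotProduct_add]
    exact add_nonneg (hX.2 x) (hY.2 x)
  have hSpsd : (∑ k, A k).PosSemidef :=
    Finset.sum_induction _ _ (fun _ _ => psd_add) Matrix.PosSemidef.zero (fun k _ => hApsd k)
  have hBpsd : B.PosSemidef := by
    rw [Matrix.posSemidef_iff_dotProduct_mulVec]
    refine ⟨hB, fun x => ?_⟩
    have h1 : star x ⬝ᵥ (B *ᵥ x)
        = (((n : ℝ)⁻¹ : ℝ) : ℂ) * (star x ⬝ᵥ ((∑ k, A k) *ᵥ x)) := by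
      rw [hBdef, Matrix.smul_mulVec, dotProduct_smul, Complex.real_smul]
    rw [h1]
    refine mul_nonneg ?_ ((Matrix.posSemidef_iff_dotProduct_mulVec.mp hSpsd).2 x)
    rw [Complex.zero_le_real]
    positivity
  have heig : ∀ i, 0 ≤ hB.eigenvalues i := fun i => hBpsd.eigenvalues_nonneg i
  -- LHS
  have hLHS : (Matrix.trace (B.cfcRpow p)).re = ∑ i, hB.eigenvalues i ^ p := by
    rw [Matrix.cfcRpow, hB.cfc_eq, Matrix.IsHermitian.cfc, Unitary.conjStarAlgAut_apply,
      trace_unitary_conj hB.eigenvectorUnitary, Matrix.trace_diagonal, Complex.re_sum]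
    simp
  -- the exp argument equals cfc g B
  have hsum1 : (∑ k : Fin n, p • (A k - 1) : Matrix (Fin d) (Fin d) ℂ)
      = p • ((∑ k, A k) - (n : ℝ) • 1) := by
    rw [← Finset.smul_sum, Finset.sum_sub_distrib]
    congr 2
    simp [Finset.card_univ, ← Nat.cast_smul_eq_nsmul (R := ℝ)]
  have hM : ((n : ℝ)⁻¹ • ∑ k, p • (A k - 1) : Matrix (Fin d) (Fin d) ℂ)
      = cfc (fun t : ℝ => p * (t - 1)) B := by
    have h1 : cfc (fun t : ℝ => p * (t - 1)) B = p • (B - 1) := by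
      have h2 : cfc (fun t : ℝ => p * (t - 1)) B
          = p • (cfc (fun t : ℝ => t - 1) B) := by
        rw [← cfc_smul p (fun t : ℝ => t - 1) B]
        simp [smul_eq_mul]
      rw [h2, cfc_sub _ _ B, cfc_id' ℝ B, cfc_const_one ℝ B]
    rw [h1, hsum1, smul_comm ((n : ℝ)⁻¹) p, smul_sub, smul_smul,
      inv_mul_cancel₀ (by exact_mod_cast hn.ne' : (n : ℝ) ≠ 0), one_smul, hBdef]
  -- RHS
  have hRHS : (Matrix.trace (NormedSpace.exp
      ((n : ℝ)⁻¹ • ∑ k, p • (A k - 1) : Matrix (Fin d) (Fin d) ℂ))).re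
      = ∑ i, Real.exp (p * (hB.eigenvalues i - 1)) := by
    rw [hM, hB.cfc_eq, Matrix.IsHermitian.cfc, Unitary.conjStarAlgAut_apply]
    set u := hB.eigenvectorUnitary with hu
    have hU : ∀ D : Matrix (Fin d) (Fin d) ℂ,
        (u : Matrix (Fin d) (Fin d) ℂ) * D * star (u : Matrix (Fin d) (Fin d) ℂ)
        = ((Unitary.toUnits u : (Matrix (Fin d) (Fin d) ℂ)ˣ) : Matrix (Fin d) (Fin d) ℂ)
          * D
          * (((Unitary.toUnits u)⁻¹ : (Matrix (Fin d) (Fin d) ℂ)ˣ) : Matrix (Fin d) (Fin d) ℂ) :=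
      fun D => rfl
    rw [hU _, Matrix.exp_units_conj, ← hU _, trace_unitary_conj u,
      Matrix.exp_diagonal, Matrix.trace_diagonal, Complex.re_sum]
    refine Finset.sum_congr rfl (fun i _ => ?_)
    rw [Pi.coe_exp, ← Complex.exp_eq_exp_ℂ]
    norm_cast
  have hgoal : (∑ k : Fin n, p • ((a k).cfcRpow p⁻¹ - 1) : Matrix (Fin d) (Fin d) ℂ)
      = ∑ k, p • (A k - 1) := rfl
  rw [hgoal, hLHS, hRHS]
  exact Finset.sum_le_sum (fun i _ => key_scalar hp (heig i))
end
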